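/- Gap interval for Theorem 1.3 exceptional sets (biprojective case, dimension level): let n₁, n₂ ≥ 1 and 0 ≤ r₁ ≤ n₁, 0 ≤ r₂ ≤ n₂, and let (a₁,a₂) be a multidegree of the form (0,c) with 0 ≤ c ≤ r₁ or (c,0) with 0 ≤ c ≤ r₂. Then for all integers i, j₁, j₂, t with 1 ≤ i ≤ n₁+n₂-1, -i ≤ j₁+j₂ ≤ 0, -n₁ ≤ j₁ ≤ 0, -n₂ ≤ j₂ ≤ 0, and NOT(i = n₁ and j₂ ≥ j₁ + n₁ - r₁ + 1) and NOT(i = n₂ and j₂ ≤ j₁ - n₂ + r₂ - 1), the Künneth dimension K_i(a₁+j₁+t, a₂+j₂+t) vanishes. -/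
import Mathlib


open Finset

/-- dim H^i(ℙ^n, O(d)) -/
def hP (n i : ℕ) (d : ℤ) : ℕ :=
  if i = 0 ∧ 0 ≤ d then ((n : ℤ) + d).toNat.choose n
  else if i = n ∧ 1 ≤ n ∧ d ≤ -(n : ℤ) - 1 then (-d - 1).toNat.choose n
  else 0

/-- Künneth dimension of H^t(ℙ^{n 0} × ⋯ × ℙ^{n (s-1)}, O(b 0, …, b (s-1))) -/
def KD (s : ℕ) (n : Fin s → ℕ) (t : ℕ) (b : Fin s → ℤ) : ℕ :=
  ∑ f ∈ (Fintype.piFinset fun _ : Fin s => Finset.range (t + 1)).filter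
      (fun f => ∑ i, f i = t), ∏ i, hP (n i) (f i) (b i)

lemma hP_ne (n t : ℕ) (d : ℤ) (h : hP n t d ≠ 0) :
    (t = 0 ∧ 0 ≤ d) ∨ (t = n ∧ 1 ≤ n ∧ d ≤ -(n : ℤ) - 1) := by
  unfold hP at h
  split_ifs at h with h1 h2
  · exact Or.inl h1
  · exact Or.inr h2
  · exact absurd rfl h

/-- 'Only if' direction of Theorem 1.3 (biprojective case) at the line-bundle level. -/
theorem thm13_only_if_biprojective (n₁ n₂ r₁ r₂ : ℕ) (hn₁ : 1 ≤ n₁) (hn₂ : 1 ≤ n₂)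
    (hr₁ : r₁ ≤ n₁) (hr₂ : r₂ ≤ n₂) (a₁ a₂ : ℤ)
    (ha : (a₁ = 0 ∧ 0 ≤ a₂ ∧ a₂ ≤ (r₁ : ℤ)) ∨ (a₂ = 0 ∧ 0 ≤ a₁ ∧ a₁ ≤ (r₂ : ℤ))) :
    ∀ (i : ℕ) (j₁ j₂ t : ℤ),
      1 ≤ i → i ≤ n₁ + n₂ - 1 →
      -(i : ℤ) ≤ j₁ + j₂ → j₁ + j₂ ≤ 0 →
      -(n₁ : ℤ) ≤ j₁ → j₁ ≤ 0 → -(n₂ : ℤ) ≤ j₂ → j₂ ≤ 0 →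
      ¬((i : ℤ) = n₁ ∧ j₂ ≥ j₁ + n₁ - r₁ + 1) →
      ¬((i : ℤ) = n₂ ∧ j₂ ≤ j₁ - n₂ + r₂ - 1) →
      KD 2 ![n₁, n₂] i ![a₁ + j₁ + t, a₂ + j₂ + t] = 0 := by
  intro i j₁ j₂ t hi1 hi2 hij1 hij2 hj1l hj1u hj2l hj2u hex1 hex2
  unfold KD
  apply Finset.sum_eq_zero
  intro f hf
  simp only [Finset.mem_filter, Fin.sum_univ_two] at hf
  obtain ⟨-, hsum⟩ := hf
  rw [Fin.prod_univ_two]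
  simp only [Matrix.cons_val_zero, Matrix.cons_val_one, Matrix.head_cons]
  by_contra h
  have h1 : hP n₁ (f 0) (a₁ + j₁ + t) ≠ 0 := fun hz => h (by rw [hz, zero_mul])
  have h2 : hP n₂ (f 1) (a₂ + j₂ + t) ≠ 0 := fun hz => h (by rw [hz, mul_zero])
  have c1 := hP_ne _ _ _ h1
  have c2 := hP_ne _ _ _ h2
  -- i ≤ n₁ + n₂ - 1 in ℕ; convert to usable form
  have hi2' : i + 1 ≤ n₁ + n₂ := by omega
  rcases c1 with ⟨e1, d1⟩ | ⟨e1, -, d1⟩ <;> rcases c2 with ⟨e2, d2⟩ | ⟨e2, -, d2⟩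
  · omega
  · -- f 0 = 0, f 1 = n₂, so i = n₂
    have : i = n₂ := by omega
    have hin : (i : ℤ) = n₂ := by exact_mod_cast this
    rcases ha with ⟨ea, eb, ec⟩ | ⟨ea, eb, ec⟩ <;> omega
  · have : i = n₁ := by omega
    have hin : (i : ℤ) = n₁ := by exact_mod_cast this
    rcases ha with ⟨ea, eb, ec⟩ | ⟨ea, eb, ec⟩ <;> omega
  · omega
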